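/- arXiv:2202.03174 — 2 statements merged into one kernel-verified Lean document; each statement's English description precedes it below -/
import Mathlib

section
/- Let (X,r) be a bijective left and right non-degenerate set-theoretic solution of the YBE, M = M(X,r) with its two operations + and ∘, and η the least left cancellative congruence on (M,+). Then η is a congruence on (M,∘) and the quotient monoid (M,∘)/η is left cancellative; consequently ν ⊆ η, where ν is the least left cancellative congruence on (M,∘). -/
open scoped Classical

section YBEDefs

variable {X : Type*}

/-- First component `σ_x(y)` of `r (x, y)`. -/
def ybeSigma (r : X × X → X × X) (x y : X) : X := (r (x, y)).1

/-- Second component `γ_y(x)` of `r (x, y)`. -/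
def ybeGamma (r : X × X → X × X) (y x : X) : X := (r (x, y)).2

/-- `r` acting on the first two components of `X³`. -/
def yb12 (r : X × X → X × X) : X × X × X → X × X × X :=
  fun p => ((r (p.1, p.2.1)).1, ((r (p.1, p.2.1)).2, p.2.2))

/-- `r` acting on the last two components of `X³`. -/
def yb23 (r : X × X → X × X) : X × X × X → X × X × X :=
  fun p => (p.1, r p.2)

/-- `(X, r)` is a set-theoretic solution of the Yang–Baxter equation. -/
def IsYBE (r : X × X → X × X) : Prop :=
  yb12 r ∘ yb23 r ∘ yb12 r = yb23 r ∘ yb12 r ∘ yb23 r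

/-- left non-degenerate: all `σ_x` are bijective. -/
def IsLeftND (r : X × X → X × X) : Prop := ∀ x, Function.Bijective (ybeSigma r x)

/-- right non-degenerate: all `γ_y` are bijective. -/
def IsRightND (r : X × X → X × X) : Prop := ∀ y, Function.Bijective (ybeGamma r y)

/-- The defining relations `x∘y = σ_x(y) ∘ γ_y(x)` of the structure monoid. -/
def structRel (r : X × X → X × X) : FreeMonoid X → FreeMonoid X → Prop :=
  fun a b => ∃ x y : X, a = FreeMonoid.of x * FreeMonoid.of y ∧
    b = FreeMonoid.of (ybeSigma r x y) * FreeMonoid.of (ybeGamma r y x)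

/-- The congruence on the free monoid generated by the defining relations. -/
def structCon (r : X × X → X × X) : Con (FreeMonoid X) := conGen (structRel r)

/-- The (multiplicative) structure monoid `M(X, r)`. -/
abbrev SM (r : X × X → X × X) := (structCon r).Quotient

/-- The canonical image of a generator `x ∈ X` in `M(X, r)`. -/
def ofSM (r : X × X → X × X) (x : X) : SM r := (structCon r).mk' (FreeMonoid.of x)

/-- The left derived solution `r'(x,y) = (y, σ_y γ_{σ_x⁻¹(y)}(x))`. -/
noncomputable def derivedR (r : X × X → X × X) : X × X → X × X := fun p =>
  haveI : Nonempty X := ⟨p.1⟩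
  (p.2, ybeSigma r p.2 (ybeGamma r (Function.invFun (ybeSigma r p.1) p.2) p.1))

/-- The defining relations `x + y = y + σ_y γ_{σ_x⁻¹(y)}(x)` of the derived
structure monoid, written additively. -/
def derivedRel (r : X × X → X × X) : FreeAddMonoid X → FreeAddMonoid X → Prop :=
  fun a b => ∃ x y : X, a = FreeAddMonoid.of x + FreeAddMonoid.of y ∧
    b = FreeAddMonoid.of ((derivedR r (x, y)).1) + FreeAddMonoid.of ((derivedR r (x, y)).2)

/-- The additive congruence generated by the derived relations. -/
noncomputable def derivedAddCon (r : X × X → X × X) : AddCon (FreeAddMonoid X) :=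
  addConGen (derivedRel r)

/-- The additive structure monoid `A(X, r) = M(X, r')`. -/
noncomputable abbrev AM (r : X × X → X × X) := (derivedAddCon r).Quotient

/-- The canonical image of a generator `x ∈ X` in `A(X, r)`. -/
noncomputable def ofAM (r : X × X → X × X) (x : X) : AM r :=
  (derivedAddCon r).mk' (FreeAddMonoid.of x)

end YBEDefs

namespace YBEAux

variable {X : Type*} (r : X × X → X × X)

/-! ### YBE identities -/

lemma ybe1 (h : IsYBE r) (x y z : X) :
    ybeSigma r (ybeSigma r x y) (ybeSigma r (ybeGamma r y x) z) = ybeSigma r x (ybeSigma r y z) := by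
  have h' := congrFun h (x, (y, z))
  simp only [Function.comp_apply, yb12, yb23, Prod.mk.injEq] at h'
  simpa only [ybeSigma, ybeGamma] using h'.1

lemma ybe2 (h : IsYBE r) (x y z : X) :
    ybeGamma r (ybeSigma r (ybeGamma r y x) z) (ybeSigma r x y) =
      ybeSigma r (ybeGamma r (ybeSigma r y z) x) (ybeGamma r z y) := by
  have h' := congrFun h (x, (y, z))
  simp only [Function.comp_apply, yb12, yb23, Prod.mk.injEq] at h'
  simpa only [ybeSigma, ybeGamma] using (Prod.ext_iff.mp h'.2).1

lemma ybe3 (h : IsYBE r) (x y z : X) :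
    ybeGamma r z (ybeGamma r y x) =
      ybeGamma r (ybeGamma r z y) (ybeGamma r (ybeSigma r y z) x) := by
  have h' := congrFun h (x, (y, z))
  simp only [Function.comp_apply, yb12, yb23, Prod.mk.injEq] at h'
  simpa only [ybeSigma, ybeGamma] using (Prod.ext_iff.mp h'.2).2

end YBEAux

namespace YBEAux2

variable {X : Type*} (r : X × X → X × X)

/-! ### word-level gamma-transport -/

def gwRev : List X → X → List X
  | [], _ => []
  | z :: t, y => ybeGamma r y z :: gwRev t (ybeSigma r z y)

def gw (w : List X) (y : X) : List X := (gwRev r w.reverse y).reverse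

def yRev : List X → X → X
  | [], y => y
  | z :: t, y => yRev t (ybeSigma r z y)

def ylet (w : List X) (y : X) : X := yRev r w.reverse y

@[simp] lemma gw_nil (y : X) : gw r [] y = [] := rfl

@[simp] lemma ylet_nil (y : X) : ylet r [] y = y := rfl

lemma gw_snoc (w : List X) (z y : X) :
    gw r (w ++ [z]) y = gw r w (ybeSigma r z y) ++ [ybeGamma r y z] := by
  unfold gw
  rw [List.reverse_append]
  simp [gwRev]

lemma ylet_snoc (w : List X) (z y : X) :
    ylet r (w ++ [z]) y = ylet r w (ybeSigma r z y) := by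
  unfold ylet
  rw [List.reverse_append]
  simp [yRev]

lemma ylet_append (w : List X) : ∀ (u : List X) (y : X),
    ylet r (w ++ u) y = ylet r w (ylet r u y) := by
  intro u
  induction u using List.reverseRecOn with
  | nil => intro y; simp
  | append_singleton u t ih =>
    intro y
    rw [← List.append_assoc, ylet_snoc, ylet_snoc, ih]

lemma gw_append (w : List X) : ∀ (u : List X) (y : X),
    gw r (w ++ u) y = gw r w (ylet r u y) ++ gw r u y := by
  intro u
  induction u using List.reverseRecOn with
  | nil => intro y; simp
  | append_singleton u t ih =>
    intro y
    rw [← List.append_assoc, gw_snoc, ylet_snoc, gw_snoc, ih, List.append_assoc]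

/-! ### structure monoid words -/

def mkW (w : List X) : SM r := (structCon r).mk' (FreeMonoid.ofList w)

@[simp] lemma mkW_nil : mkW r [] = 1 := by
  rw [mkW, FreeMonoid.ofList_nil, map_one]

lemma mkW_append (w u : List X) : mkW r (w ++ u) = mkW r w * mkW r u := by
  rw [mkW, FreeMonoid.ofList_append, map_mul]; rfl

@[simp] lemma mkW_singleton (x : X) : mkW r [x] = ofSM r x := by
  rw [mkW, FreeMonoid.ofList_singleton]; rfl

lemma ofSM_mul (x y : X) :
    ofSM r x * ofSM r y = ofSM r (ybeSigma r x y) * ofSM r (ybeGamma r y x) := by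
  rw [ofSM, ofSM, ofSM, ofSM, ← map_mul, ← map_mul]
  exact (Con.eq _).mpr (ConGen.Rel.of _ _ ⟨x, y, rfl, rfl⟩)

lemma mkW_pair (a b : X) : mkW r [a, b] = ofSM r a * ofSM r b := by
  have : ([a, b] : List X) = [a] ++ [b] := rfl
  rw [this, mkW_append, mkW_singleton, mkW_singleton]

lemma smRep (m : SM r) : ∃ v : List X, m = mkW r v := by
  obtain ⟨w, hw⟩ := Con.mk'_surjective (c := structCon r) m
  exact ⟨w.toList, by rw [← hw, mkW, FreeMonoid.ofList_toList]⟩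

end YBEAux2

namespace YBEAux3

open YBEAux YBEAux2

variable {X : Type*} (r : X × X → X × X)

@[simp] lemma ylet_pair (a b y : X) :
    ylet r [a, b] y = ybeSigma r a (ybeSigma r b y) := rfl

@[simp] lemma gw_pair (a b y : X) :
    gw r [a, b] y = [ybeGamma r (ybeSigma r b y) a, ybeGamma r y b] := rfl

lemma gw_welldef (hY : IsYBE r) :
    ∀ {w₁ w₂ : FreeMonoid X}, (structCon r) w₁ w₂ → ∀ y : X,
      ylet r w₁.toList y = ylet r w₂.toList y ∧
      mkW r (gw r w₁.toList y) = mkW r (gw r w₂.toList y) := by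
  intro w₁ w₂ h
  induction h with
  | of a b hab =>
    obtain ⟨x, x', ha, hb⟩ := hab
    subst ha; subst hb
    intro y
    rw [show (FreeMonoid.of x * FreeMonoid.of x').toList = [x, x'] from rfl,
        show (FreeMonoid.of (ybeSigma r x x') * FreeMonoid.of (ybeGamma r x' x)).toList
          = [ybeSigma r x x', ybeGamma r x' x] from rfl]
    constructor
    · rw [ylet_pair, ylet_pair]
      exact (ybe1 r hY x x' y).symm
    · rw [gw_pair, gw_pair, mkW_pair, mkW_pair, ofSM_mul]
      rw [← ybe2 r hY x x' y, ybe3 r hY x x' y]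
  | refl w => intro y; exact ⟨rfl, rfl⟩
  | symm _ ih => intro y; exact ⟨(ih y).1.symm, (ih y).2.symm⟩
  | trans _ _ ih1 ih2 => intro y; exact ⟨((ih1 y).1).trans (ih2 y).1, ((ih1 y).2).trans (ih2 y).2⟩
  | mul _ _ ih1 ih2 =>
    intro y
    rw [FreeMonoid.toList_mul, FreeMonoid.toList_mul, ylet_append, ylet_append,
        gw_append, gw_append, mkW_append, mkW_append]
    refine ⟨?_, ?_⟩
    · rw [(ih2 y).1, (ih1 _).1]
    · rw [(ih2 y).1, (ih2 y).2, (ih1 _).2]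

def rho (hY : IsYBE r) (y : X) (m : SM r) : SM r :=
  Quotient.liftOn m (fun w => mkW r (gw r (FreeMonoid.toList w) y))
    (fun _ _ h => ((gw_welldef r hY h) y).2)

@[simp] lemma rho_mkW (hY : IsYBE r) (y : X) (w : List X) :
    rho r hY y (mkW r w) = mkW r (gw r w y) := rfl

lemma gwgw (hY : IsYBE r) (v : List X) : ∀ (x x' : X),
    mkW r (gw r (gw r v x) x') =
      mkW r (gw r (gw r v (ybeSigma r x x')) (ybeGamma r x' x)) := by
  induction v using List.reverseRecOn with
  | nil => intro x x'; rfl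
  | append_singleton v z ih =>
    intro x x'
    simp only [gw_snoc, mkW_append, mkW_singleton]
    rw [ih (ybeSigma r z x) (ybeSigma r (ybeGamma r x z) x')]
    rw [ybe1 r hY z x x', ybe2 r hY z x x', ← ybe3 r hY z x x']

def fold (hY : IsYBE r) (m : SM r) (w : List X) : SM r :=
  w.foldl (fun m y => rho r hY y m) m

@[simp] lemma fold_nil (hY : IsYBE r) (m : SM r) : fold r hY m [] = m := rfl

lemma fold_append (hY : IsYBE r) (m : SM r) (w u : List X) :
    fold r hY m (w ++ u) = fold r hY (fold r hY m w) u :=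
  List.foldl_append

lemma fold_snoc (hY : IsYBE r) (m : SM r) (w : List X) (y : X) :
    fold r hY m (w ++ [y]) = rho r hY y (fold r hY m w) :=
  List.foldl_append

lemma fold_welldef (hY : IsYBE r) {w₁ w₂ : FreeMonoid X} (h : structCon r w₁ w₂) :
    ∀ m, fold r hY m w₁.toList = fold r hY m w₂.toList := by
  induction h with
  | of a b hab =>
    obtain ⟨x, x', ha, hb⟩ := hab
    subst ha; subst hb
    intro m
    obtain ⟨v, rfl⟩ := smRep r m
    show rho r hY x' (rho r hY x (mkW r v)) =
      rho r hY (ybeGamma r x' x) (rho r hY (ybeSigma r x x') (mkW r v))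
    rw [rho_mkW, rho_mkW, rho_mkW, rho_mkW]
    exact gwgw r hY v x x'
  | refl w => intro m; rfl
  | symm _ ih => intro m; exact (ih m).symm
  | trans _ _ ih1 ih2 => intro m; exact (ih1 m).trans (ih2 m)
  | mul _ _ ih1 ih2 =>
    intro m
    rw [FreeMonoid.toList_mul, FreeMonoid.toList_mul, fold_append, fold_append, ih1 m, ih2 _]

end YBEAux3

namespace YBEAux4

open YBEAux YBEAux2 YBEAux3

variable {X : Type*} (r : X × X → X × X)

lemma rho_surj_words (hY : IsYBE r) (hRND : IsRightND r) :
    ∀ (v : List X) (y : X), ∃ m, rho r hY y m = mkW r v := by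
  intro v
  induction v using List.reverseRecOn with
  | nil =>
    intro y
    refine ⟨1, ?_⟩
    rw [show (1 : SM r) = mkW r [] from (mkW_nil r).symm, rho_mkW, gw_nil]
  | append_singleton v t ih =>
    intro y
    obtain ⟨z, hz⟩ := (hRND y).surjective t
    obtain ⟨m, hm⟩ := ih (ybeSigma r z y)
    obtain ⟨u, rfl⟩ := smRep r m
    refine ⟨mkW r (u ++ [z]), ?_⟩
    rw [rho_mkW, gw_snoc, mkW_append, mkW_append, mkW_singleton, mkW_singleton, hz]
    rw [show mkW r (gw r u (ybeSigma r z y)) = rho r hY (ybeSigma r z y) (mkW r u) from rfl, hm]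

lemma rho_surj (hY : IsYBE r) (hRND : IsRightND r) (y : X) (m : SM r) :
    ∃ m', rho r hY y m' = m := by
  obtain ⟨v, rfl⟩ := smRep r m
  exact rho_surj_words r hY hRND v y

lemma fold_surj (hY : IsYBE r) (hRND : IsRightND r) :
    ∀ (w : List X) (m : SM r), ∃ m₀, fold r hY m₀ w = m := by
  intro w
  induction w with
  | nil => intro m; exact ⟨m, rfl⟩
  | cons y t ih =>
    intro m
    obtain ⟨m₁, hm₁⟩ := ih m
    obtain ⟨m₀, hm₀⟩ := rho_surj r hY hRND y m₁
    exact ⟨m₀, by rw [show fold r hY m₀ (y :: t) = fold r hY (rho r hY y m₀) t from rfl, hm₀, hm₁]⟩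

end YBEAux4

namespace YBEAux5

open YBEAux YBEAux2 YBEAux3 YBEAux4

/-- The multiplicative group structure on `AddAut M` used in the auxiliary lemmas. -/
instance addAutMulGroup (M : Type*) [Add M] : Group (AddAut M) where
  mul g h := AddEquiv.trans h g
  one := AddEquiv.refl _
  inv := AddEquiv.symm
  mul_assoc _ _ _ := rfl
  one_mul _ := rfl
  mul_one _ := rfl
  inv_mul_cancel := AddEquiv.self_trans_symm

theorem _root_.AddAut.mulAut_mul_apply {M : Type*} [Add M] (e₁ e₂ : AddAut M) (m : M) :
    (e₁ * e₂) m = e₁ (e₂ m) := rfl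

theorem _root_.AddAut.mulAut_one_apply {M : Type*} [Add M] (m : M) : (1 : AddAut M) m = m := rfl

/-- Transport of a hom into `Multiplicative (AddAut N)`. -/
def toMulHom {M N : Type*} [Monoid M] [Add N] (f : M →* Multiplicative (AddAut N)) :
    M →* AddAut N :=
  { toFun := fun a => Multiplicative.toAdd (f a)
    map_one' := f.map_one
    map_mul' := f.map_mul }

variable {X : Type*} (r : X × X → X × X)
variable (lam : SM r →* AddAut (AM r)) (pi : SM r ≃ AM r)

/-! ### single-letter pull-through in terms of `pi` and `lam` -/

lemma pull (hY : IsYBE r)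
    (hlamX : ∀ x y : X, lam (ofSM r x) (ofAM r y) = ofAM r (ybeSigma r x y))
    (hpiX : ∀ x : X, pi (ofSM r x) = ofAM r x) :
    ∀ (v : List X) (y : X),
      mkW r v * ofSM r y = pi.symm (lam (mkW r v) (ofAM r y)) * mkW r (gw r v y) := by
  intro v
  induction v using List.reverseRecOn with
  | nil =>
    intro y
    rw [mkW_nil, gw_nil, mkW_nil, map_one, AddAut.mulAut_one_apply, one_mul, mul_one]
    rw [← hpiX y, Equiv.symm_apply_apply]
  | append_singleton v z ih =>
    intro y
    rw [mkW_append, mkW_singleton, gw_snoc, mkW_append, mkW_singleton]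
    rw [mul_assoc, ofSM_mul r z y, ← mul_assoc, ih (ybeSigma r z y), mul_assoc]
    rw [map_mul, AddAut.mulAut_mul_apply, hlamX z y]

/-! ### length on `AM` -/

noncomputable def lenAM : AM r →+ ℕ :=
  (derivedAddCon r).lift (FreeAddMonoid.lift (fun _ => (1 : ℕ))) (by
    apply AddCon.addConGen_le.2
    intro a b hab
    obtain ⟨x, y, ha, hb⟩ := hab
    subst ha; subst hb
    rw [AddCon.ker_rel, map_add, map_add, FreeAddMonoid.lift_eval_of,
      FreeAddMonoid.lift_eval_of, FreeAddMonoid.lift_eval_of, FreeAddMonoid.lift_eval_of])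

noncomputable def amW (l : List X) : AM r := (derivedAddCon r).mk' (FreeAddMonoid.ofList l)

@[simp] lemma amW_nil : amW r [] = 0 := by rw [amW, FreeAddMonoid.ofList_nil, map_zero]

lemma amW_cons (x : X) (l : List X) : amW r (x :: l) = ofAM r x + amW r l := by
  rw [amW, FreeAddMonoid.ofList_cons, map_add]; rfl

lemma amRep (a : AM r) : ∃ l : List X, a = amW r l := by
  obtain ⟨w, hw⟩ := AddCon.mk'_surjective (c := derivedAddCon r) a
  exact ⟨FreeAddMonoid.toList w, by rw [← hw, amW, FreeAddMonoid.ofList_toList]⟩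

lemma lenAM_amW (l : List X) : lenAM r (amW r l) = l.length := by
  induction l with
  | nil => rw [amW_nil, map_zero]; rfl
  | cons x t ih =>
    rw [amW_cons, map_add, ih, show lenAM r (ofAM r x) = 1 from ?_]
    · rw [List.length_cons]; omega
    · rw [ofAM, lenAM]; exact (AddCon.lift_mk' ..).trans (FreeAddMonoid.lift_eval_of ..)

lemma eq_zero_of_lenAM {a : AM r} (h : lenAM r a = 0) : a = 0 := by
  obtain ⟨l, rfl⟩ := amRep r a
  rw [lenAM_amW] at h
  rw [List.length_eq_zero_iff.mp h, amW_nil]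

lemma pi_one (hpi : ∀ a b : SM r, pi (a * b) = pi a + lam a (pi b)) : pi 1 = 0 := by
  have h := hpi 1 1
  rw [mul_one, map_one lam, AddAut.mulAut_one_apply] at h
  have h2 : lenAM r (pi 1) = lenAM r (pi 1) + lenAM r (pi 1) := by
    conv_lhs => rw [h]
    rw [map_add]
  exact eq_zero_of_lenAM r (by omega)

lemma pisymm_zero (hpi : ∀ a b : SM r, pi (a * b) = pi a + lam a (pi b)) :
    pi.symm 0 = 1 := by
  rw [← pi_one r lam pi hpi, Equiv.symm_apply_apply]

/-! ### multi-letter pull-through -/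

lemma pullMany (hY : IsYBE r)
    (hlamX : ∀ x y : X, lam (ofSM r x) (ofAM r y) = ofAM r (ybeSigma r x y))
    (hpiX : ∀ x : X, pi (ofSM r x) = ofAM r x)
    (hpi : ∀ a b : SM r, pi (a * b) = pi a + lam a (pi b)) :
    ∀ (w : List X) (p : SM r),
      p * mkW r w = pi.symm (lam p (pi (mkW r w))) * fold r hY p w := by
  intro w
  induction w using List.reverseRecOn with
  | nil =>
    intro p
    rw [mkW_nil, fold_nil, mul_one, pi_one r lam pi hpi, map_zero,
      pisymm_zero r lam pi hpi, one_mul]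
  | append_singleton w y ih =>
    intro p
    have hlam : lam p * lam (mkW r w) = lam (pi.symm (lam p (pi (mkW r w)))) * lam (fold r hY p w) := by
      rw [← map_mul, ← map_mul, ih p]
    calc p * mkW r (w ++ [y])
        = (p * mkW r w) * ofSM r y := by rw [mkW_append, mkW_singleton, mul_assoc]
      _ = pi.symm (lam p (pi (mkW r w))) * (fold r hY p w * ofSM r y) := by
          rw [ih p, mul_assoc]
      _ = pi.symm (lam p (pi (mkW r w))) *
            (pi.symm (lam (fold r hY p w) (ofAM r y)) * rho r hY y (fold r hY p w)) := by
          obtain ⟨u, hu⟩ := smRep r (fold r hY p w)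
          rw [hu, rho_mkW, ← pull r lam pi hY hlamX hpiX u y]
      _ = (pi.symm (lam p (pi (mkW r w))) * pi.symm (lam (fold r hY p w) (ofAM r y))) *
            fold r hY p (w ++ [y]) := by rw [fold_snoc, mul_assoc]
      _ = pi.symm (lam p (pi (mkW r (w ++ [y])))) * fold r hY p (w ++ [y]) := by
          congr 1
          apply pi.injective
          rw [hpi, Equiv.apply_symm_apply, Equiv.apply_symm_apply, Equiv.apply_symm_apply]
          have h2 : lam (pi.symm (lam p (pi (mkW r w)))) (lam (fold r hY p w) (ofAM r y))
              = lam p (lam (mkW r w) (ofAM r y)) := by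
            rw [← AddAut.mulAut_mul_apply, ← hlam, AddAut.mulAut_mul_apply]
          rw [h2, mkW_append, mkW_singleton, hpi, map_add, hpiX]

end YBEAux5

namespace YBEAux6

open YBEAux YBEAux2 YBEAux3 YBEAux4 YBEAux5

variable {X : Type*} (r : X × X → X × X)

noncomputable def sMap (x y : X) : X := (derivedR r (x, y)).2

lemma am_rel (x y : X) :
    ofAM r x + ofAM r y = ofAM r y + ofAM r (sMap r x y) := by
  show (derivedAddCon r).mk' _ + (derivedAddCon r).mk' _ =
    (derivedAddCon r).mk' _ + (derivedAddCon r).mk' _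
  rw [← map_add, ← map_add]
  exact (AddCon.eq _).mpr (AddConGen.Rel.of _ _ ⟨x, y, rfl, rfl⟩)

lemma sMap_surj (hbij : Function.Bijective r) (hLND : IsLeftND r) (v t : X) :
    ∃ u, sMap r u v = t := by
  haveI : Nonempty X := ⟨v⟩
  obtain ⟨⟨u₀, z₀⟩, huv⟩ := hbij.surjective (v, Function.invFun (ybeSigma r v) t)
  have h1 : ybeSigma r u₀ z₀ = v := by rw [ybeSigma, huv]
  have h2 : ybeGamma r z₀ u₀ = Function.invFun (ybeSigma r v) t := by rw [ybeGamma, huv]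
  refine ⟨u₀, ?_⟩
  show (derivedR r (u₀, v)).2 = t
  have h3 : Function.invFun (ybeSigma r u₀) v = z₀ := by
    rw [← h1]; exact Function.leftInverse_invFun (hLND u₀).injective z₀
  calc (derivedR r (u₀, v)).2
      = ybeSigma r v (ybeGamma r (Function.invFun (ybeSigma r u₀) v) u₀) := rfl
    _ = ybeSigma r v (Function.invFun (ybeSigma r v) t) := by rw [h3, h2]
    _ = t := Function.invFun_eq ((hLND v).surjective t)

lemma rr1a (hbij : Function.Bijective r) (hLND : IsLeftND r) (x : X) :
    ∀ (l : List X), ∃ e, e + ofAM r x = ofAM r x + amW r l := by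
  intro l
  induction l with
  | nil => exact ⟨0, by rw [amW_nil, zero_add, add_zero]⟩
  | cons y t ih =>
    obtain ⟨e₁, he₁⟩ := ih
    obtain ⟨u, hu⟩ := sMap_surj r hbij hLND x y
    refine ⟨ofAM r u + e₁, ?_⟩
    calc (ofAM r u + e₁) + ofAM r x
        = ofAM r u + (e₁ + ofAM r x) := by rw [add_assoc]
      _ = ofAM r u + (ofAM r x + amW r t) := by rw [he₁]
      _ = (ofAM r u + ofAM r x) + amW r t := by rw [add_assoc]
      _ = (ofAM r x + ofAM r (sMap r u x)) + amW r t := by rw [am_rel]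
      _ = (ofAM r x + ofAM r y) + amW r t := by rw [hu]
      _ = ofAM r x + (ofAM r y + amW r t) := by rw [add_assoc]
      _ = ofAM r x + amW r (y :: t) := by rw [amW_cons]

lemma rr1 (hbij : Function.Bijective r) (hLND : IsLeftND r) :
    ∀ (c d : AM r), ∃ d', d' + c = c + d := by
  intro c d
  obtain ⟨w, rfl⟩ := amRep r c
  induction w generalizing d with
  | nil => exact ⟨d, by rw [amW_nil, add_zero, zero_add]⟩
  | cons x t ih =>
    obtain ⟨e, he⟩ := ih d
    obtain ⟨le, hle⟩ := amRep r e
    obtain ⟨d', hd'⟩ := rr1a r hbij hLND x le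
    refine ⟨d', ?_⟩
    calc d' + amW r (x :: t)
        = (d' + ofAM r x) + amW r t := by rw [amW_cons, add_assoc]
      _ = (ofAM r x + e) + amW r t := by rw [hd', hle]
      _ = ofAM r x + (e + amW r t) := by rw [add_assoc]
      _ = ofAM r x + (amW r t + d) := by rw [he]
      _ = amW r (x :: t) + d := by rw [amW_cons, add_assoc]

lemma xiRel_trans (hbij : Function.Bijective r) (hLND : IsLeftND r) {a b e : AM r}
    (h1 : ∃ c, c + a = c + b) (h2 : ∃ d, d + b = d + e) : ∃ m, m + a = m + e := by
  obtain ⟨c, hc⟩ := h1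
  obtain ⟨d, hd⟩ := h2
  obtain ⟨d'', hdd⟩ := rr1 r hbij hLND c d
  refine ⟨c + d, ?_⟩
  calc (c + d) + a = d'' + (c + a) := by rw [← hdd, add_assoc]
    _ = d'' + (c + b) := by rw [hc]
    _ = (c + d) + b := by rw [← add_assoc, hdd]
    _ = c + (d + b) := by rw [add_assoc]
    _ = c + (d + e) := by rw [hd]
    _ = (c + d) + e := by rw [add_assoc]

noncomputable def xiC (hbij : Function.Bijective r) (hLND : IsLeftND r) : AddCon (AM r) :=
  { r := fun a b => ∃ c, c + a = c + b
    iseqv :=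
      { refl := fun _ => ⟨0, rfl⟩
        symm := fun ⟨c, h⟩ => ⟨c, h.symm⟩
        trans := fun h1 h2 => xiRel_trans r hbij hLND h1 h2 }
    add' := by
      rintro w x y z ⟨c, hc⟩ ⟨d, hd⟩
      have step1 : ∃ m, m + (w + y) = m + (w + z) := by
        obtain ⟨w'', hw⟩ := rr1 r hbij hLND w d
        refine ⟨w'', ?_⟩
        calc w'' + (w + y) = (w'' + w) + y := by rw [add_assoc]
          _ = (w + d) + y := by rw [hw]
          _ = w + (d + y) := by rw [add_assoc]
          _ = w + (d + z) := by rw [hd]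
          _ = (w + d) + z := by rw [← add_assoc]
          _ = (w'' + w) + z := by rw [hw]
          _ = w'' + (w + z) := by rw [add_assoc]
      have step2 : ∃ m, m + (w + z) = m + (x + z) := by
        refine ⟨c, ?_⟩
        calc c + (w + z) = (c + w) + z := by rw [add_assoc]
          _ = (c + x) + z := by rw [hc]
          _ = c + (x + z) := by rw [add_assoc]
      exact xiRel_trans r hbij hLND step1 step2 }

end YBEAux6

namespace YBEAux7

open YBEAux YBEAux2 YBEAux3 YBEAux4 YBEAux5 YBEAux6

variable {X : Type*} (r : X × X → X × X)
variable (lam : SM r →* AddAut (AM r)) (pi : SM r ≃ AM r)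
variable (eta : AddCon (AM r))

lemma eta_aut
    (heta : IsLeast {c : AddCon (AM r) | ∀ z a b : AM r, c (z + a) (z + b) → c a b} eta)
    (g : AddAut (AM r)) {a b : AM r} (h : eta a b) : eta (g a) (g b) := by
  let cg : AddCon (AM r) :=
    { r := fun u v => eta (g u) (g v)
      iseqv :=
        { refl := fun u => eta.refl _
          symm := fun h => eta.symm h
          trans := fun h1 h2 => eta.trans h1 h2 }
      add' := by
        intro p q u v h1 h2
        have h3 := eta.add h1 h2
        show eta (g (p + u)) (g (q + v))
        rw [map_add g p u, map_add g q v]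
        exact h3 }
  have hmem : cg ∈ {c : AddCon (AM r) | ∀ z a b : AM r, c (z + a) (z + b) → c a b} := by
    intro z a b hz
    have hz' : eta (g z + g a) (g z + g b) := by
      have h4 : eta (g (z + a)) (g (z + b)) := hz
      rwa [map_add g z a, map_add g z b] at h4
    exact heta.1 (g z) _ _ hz'
  exact heta.2 hmem h

lemma eta_le_xi (hbij : Function.Bijective r) (hLND : IsLeftND r)
    (heta : IsLeast {c : AddCon (AM r) | ∀ z a b : AM r, c (z + a) (z + b) → c a b} eta)
    {a b : AM r} (h : eta a b) : ∃ c, c + a = c + b := by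
  have hmem : xiC r hbij hLND ∈
      {c : AddCon (AM r) | ∀ z a b : AM r, c (z + a) (z + b) → c a b} := by
    rintro z a b ⟨c, hc⟩
    exact ⟨c + z, by rw [add_assoc, add_assoc]; exact hc⟩
  exact heta.2 hmem h

lemma aut_apply_inv (g : AddAut (AM r)) (x : AM r) : g (g⁻¹ x) = x := by
  rw [← AddAut.mulAut_mul_apply, mul_inv_cancel, AddAut.mulAut_one_apply]

lemma aut_inv_apply (g : AddAut (AM r)) (x : AM r) : g⁻¹ (g x) = x := by
  rw [← AddAut.mulAut_mul_apply, inv_mul_cancel, AddAut.mulAut_one_apply]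

/-- The key rigidity lemma: `eta`-related elements have equal `λ`-maps. -/
lemma lam_eq (hY : IsYBE r) (hLND : IsLeftND r) (hRND : IsRightND r)
    (hbij : Function.Bijective r)
    (hlamX : ∀ x y : X, lam (ofSM r x) (ofAM r y) = ofAM r (ybeSigma r x y))
    (hpiX : ∀ x : X, pi (ofSM r x) = ofAM r x)
    (hpi : ∀ a b : SM r, pi (a * b) = pi a + lam a (pi b))
    (heta : IsLeast {c : AddCon (AM r) | ∀ z a b : AM r, c (z + a) (z + b) → c a b} eta)
    {a b : AM r} (h : eta a b) :
    lam (pi.symm a) = lam (pi.symm b) := by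
  obtain ⟨c, hc⟩ := eta_le_xi r eta hbij hLND heta h
  have autinv := aut_apply_inv r
  -- notation
  have hqa2 : lam (pi.symm c) (pi (pi.symm ((lam (pi.symm c))⁻¹ a))) = a := by
    rw [Equiv.apply_symm_apply, autinv]
  have hqb2 : lam (pi.symm c) (pi (pi.symm ((lam (pi.symm c))⁻¹ b))) = b := by
    rw [Equiv.apply_symm_apply, autinv]
  have hpa : pi (pi.symm c * pi.symm ((lam (pi.symm c))⁻¹ a)) = c + a := by
    rw [hpi, Equiv.apply_symm_apply, hqa2]
  have hpb : pi (pi.symm c * pi.symm ((lam (pi.symm c))⁻¹ b)) = c + b := by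
    rw [hpi, Equiv.apply_symm_apply, hqb2]
  have key : pi.symm c * pi.symm ((lam (pi.symm c))⁻¹ a)
      = pi.symm c * pi.symm ((lam (pi.symm c))⁻¹ b) :=
    pi.injective (by rw [hpa, hpb, hc])
  obtain ⟨pw, hpw⟩ := smRep r (pi.symm c)
  obtain ⟨wa, hwa⟩ := smRep r (pi.symm ((lam (pi.symm c))⁻¹ a))
  obtain ⟨wb, hwb⟩ := smRep r (pi.symm ((lam (pi.symm c))⁻¹ b))
  have hmkeq : mkW r (pw ++ wa) = mkW r (pw ++ wb) := by
    rw [mkW_append, mkW_append, ← hpw, ← hwa, ← hwb]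
    exact key
  have hcon : (structCon r) (FreeMonoid.ofList (pw ++ wa)) (FreeMonoid.ofList (pw ++ wb)) :=
    (Con.eq _).mp hmkeq
  obtain ⟨m₀, hm₀⟩ := fold_surj r hY hRND pw (pi.symm c)
  have hV : fold r hY (pi.symm c) wa = fold r hY (pi.symm c) wb := by
    have h1 := fold_welldef r hY hcon m₀
    rw [FreeMonoid.toList_ofList, FreeMonoid.toList_ofList, fold_append, fold_append, hm₀] at h1
    exact h1
  have e1 : pi.symm c * pi.symm ((lam (pi.symm c))⁻¹ a)
      = pi.symm a * fold r hY (pi.symm c) wa := by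
    have h2 := pullMany r lam pi hY hlamX hpiX hpi wa (pi.symm c)
    rw [← hwa, hqa2] at h2
    exact h2
  have e2 : pi.symm c * pi.symm ((lam (pi.symm c))⁻¹ b)
      = pi.symm b * fold r hY (pi.symm c) wa := by
    have h2 := pullMany r lam pi hY hlamX hpiX hpi wb (pi.symm c)
    rw [← hwb, hqb2, ← hV] at h2
    exact h2
  have efin : pi.symm a * fold r hY (pi.symm c) wa
      = pi.symm b * fold r hY (pi.symm c) wa := by
    rw [← e1, key, e2]
  have hfin := congrArg lam efin
  rw [map_mul, map_mul] at hfin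
  exact mul_right_cancel hfin

end YBEAux7


/-- For a bijective left and right non-degenerate solution, `η` is a congruence
on `(M,∘)` with left cancellative quotient; consequently `ν ⊆ η`. Here `∘` on
`A(X,r)` is the multiplication transported from `M(X,r)` via `π`. -/
theorem eta_mul_congruence_leftCancel {X : Type*} (r : X × X → X × X)
    (hYBE : IsYBE r) (hLND : IsLeftND r) (hRND : IsRightND r)
    (hbij : Function.Bijective r)
(lam : SM r →* Multiplicative (AddAut (AM r)))
    (hlamX : ∀ x y : X, Multiplicative.toAdd (lam (ofSM r x)) (ofAM r y) = ofAM r (ybeSigma r x y))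
    (pi : SM r ≃ AM r)
    (hpiX : ∀ x : X, pi (ofSM r x) = ofAM r x)
    (hpi : ∀ a b : SM r, pi (a * b) = pi a + Multiplicative.toAdd (lam a) (pi b))
(eta : AddCon (AM r))
    (heta : IsLeast {c : AddCon (AM r) | ∀ z a b : AM r, c (z + a) (z + b) → c a b} eta)
(nu : Con (SM r))
    (hnu : IsLeast {c : Con (SM r) | ∀ z a b : SM r, c (z * a) (z * b) → c a b} nu) :
    (∀ a b c d : AM r, eta a b → eta c d →
      eta (pi (pi.symm a * pi.symm c)) (pi (pi.symm b * pi.symm d))) ∧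
    (∀ z a b : AM r,
      eta (pi (pi.symm z * pi.symm a)) (pi (pi.symm z * pi.symm b)) → eta a b) ∧
    (∀ a b : SM r, nu a b → eta (pi a) (pi b)) := by
  have atom : ∀ {a b : AM r}, eta a b → lam (pi.symm a) = lam (pi.symm b) :=
    fun h => YBEAux7.lam_eq r (YBEAux5.toMulHom lam) pi eta hYBE hLND hRND hbij hlamX hpiX hpi heta h
  have aut : ∀ (g : AddAut (AM r)) (a b : AM r), eta a b → eta (g a) (g b) :=
    fun g a b h => YBEAux7.eta_aut r eta heta g h
  have autinv := YBEAux7.aut_inv_apply r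
  have g1 : ∀ a b c d : AM r, eta a b → eta c d →
      eta (pi (pi.symm a * pi.symm c)) (pi (pi.symm b * pi.symm d)) := by
    intro a b c d hab hcd
    rw [hpi, hpi, Equiv.apply_symm_apply, Equiv.apply_symm_apply,
      Equiv.apply_symm_apply, Equiv.apply_symm_apply]
    rw [atom hab]
    exact eta.add hab (aut (lam (pi.symm b)) _ _ hcd)
  have g2 : ∀ z a b : AM r,
      eta (pi (pi.symm z * pi.symm a)) (pi (pi.symm z * pi.symm b)) → eta a b := by
    intro z a b h
    rw [hpi, hpi, Equiv.apply_symm_apply, Equiv.apply_symm_apply,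
      Equiv.apply_symm_apply] at h
    have h2 := heta.1 z _ _ h
    have h3 := aut (-Multiplicative.toAdd (lam (pi.symm z))) _ _ h2
    simpa using h3
  refine ⟨g1, g2, ?_⟩
  intro a b h
  let cSM : Con (SM r) :=
    { r := fun u v => eta (pi u) (pi v)
      iseqv :=
        { refl := fun u => eta.refl _
          symm := fun h => eta.symm h
          trans := fun h1 h2 => eta.trans h1 h2 }
      mul' := by
        intro p q u v h1 h2
        show eta (pi (p * u)) (pi (q * v))
        have h3 := g1 (pi p) (pi q) (pi u) (pi v) h1 h2
        rwa [Equiv.symm_apply_apply, Equiv.symm_apply_apply, Equiv.symm_apply_apply,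
          Equiv.symm_apply_apply] at h3 }
  have hmem : cSM ∈ {c : Con (SM r) | ∀ z a b : SM r, c (z * a) (z * b) → c a b} := by
    intro z a' b' hz
    have hz' : eta (pi (z * a')) (pi (z * b')) := hz
    show eta (pi a') (pi b')
    have h4 := g2 (pi z) (pi a') (pi b')
    apply h4
    rwa [Equiv.symm_apply_apply, Equiv.symm_apply_apply, Equiv.symm_apply_apply] at *
  exact hnu.2 hmem h
end

section
/- Let (X,r) be a left non-degenerate set-theoretic solution of the YBE and M = M(X,r), identified with A(X,r) via the bijective 1-cocycle π, so that M carries the two operations + and ∘. Then M + a ⊆ a + M for all a ∈ M; and if moreover r is bijective, then the left derived solution (X,r') is right non-degenerate and M + a = a + M for all a ∈ M. -/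
open scoped Classical

section T
variable {X : Type*} (r : X × X → X × X)

lemma derived_comm (x y : X) :
    ofAM r x + ofAM r y = ofAM r y + ofAM r ((derivedR r (x, y)).2) := by
  have h : (derivedAddCon r) (FreeAddMonoid.of x + FreeAddMonoid.of y)
      (FreeAddMonoid.of ((derivedR r (x,y)).1) + FreeAddMonoid.of ((derivedR r (x,y)).2)) :=
    AddConGen.Rel.of _ _ ⟨x, y, rfl, rfl⟩
  have h2 : (derivedR r (x,y)).1 = y := rfl
  have := ((derivedAddCon r).eq).mpr h
  simpa [ofAM, map_add, h2] using this

lemma am_ind {motive : AM r → Prop} (h0 : motive 0)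
    (hx : ∀ (x : X) (a : AM r), motive a → motive (ofAM r x + a)) :
    ∀ a : AM r, motive a := by
  intro a
  induction a using AddCon.induction_on with
  | H w =>
    refine FreeAddMonoid.recOn w ?_ ?_
    · exact h0
    · intro x w ih
      have : ((FreeAddMonoid.of x + w : FreeAddMonoid X) : AM r) = ofAM r x + (w : AM r) := rfl
      rw [this]
      exact hx x _ ih
end T


/-- For a left non-degenerate solution, `M + a ⊆ a + M` for all `a ∈ M`; if
moreover `r` is bijective, then the left derived solution is right
non-degenerate and `M + a = a + M` for all `a ∈ M`. -/
theorem add_normal {X : Type*} (r : X × X → X × X)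
    (hYBE : IsYBE r) (hLND : IsLeftND r)
(lam : SM r →* Multiplicative (AddAut (AM r)))
    (hlamX : ∀ x y : X, Multiplicative.toAdd (lam (ofSM r x)) (ofAM r y) = ofAM r (ybeSigma r x y))
    (pi : SM r ≃ AM r)
    (hpiX : ∀ x : X, pi (ofSM r x) = ofAM r x)
    (hpi : ∀ a b : SM r, pi (a * b) = pi a + Multiplicative.toAdd (lam a) (pi b)) :
    (∀ a b : AM r, ∃ c : AM r, b + a = a + c) ∧
    (Function.Bijective r →
      IsRightND (derivedR r) ∧ ∀ a b : AM r, ∃ c : AM r, a + b = c + a) := by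

  -- generic moving lemma: b + (generator) = (generator) + c
  have claimA : ∀ (x : X) (b : AM r), ∃ c : AM r, b + ofAM r x = ofAM r x + c := by
    intro x b
    induction b using am_ind with
    | h0 => exact ⟨0, by simp⟩
    | hx y b ih =>
      obtain ⟨c', hc'⟩ := ih
      refine ⟨ofAM r ((derivedR r (y, x)).2) + c', ?_⟩
      calc ofAM r y + b + ofAM r x = ofAM r y + (b + ofAM r x) := by rw [add_assoc]
        _ = ofAM r y + (ofAM r x + c') := by rw [hc']
        _ = (ofAM r y + ofAM r x) + c' := by rw [add_assoc]
        _ = (ofAM r x + ofAM r ((derivedR r (y, x)).2)) + c' := by rw [derived_comm]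
        _ = ofAM r x + (ofAM r ((derivedR r (y, x)).2) + c') := by rw [add_assoc]
  have part1 : ∀ a b : AM r, ∃ c : AM r, b + a = a + c := by
    intro a
    induction a using am_ind with
    | h0 => exact fun b => ⟨b, by simp⟩
    | hx x a' ih =>
      intro b
      obtain ⟨c', hc'⟩ := claimA x b
      obtain ⟨c'', hc''⟩ := ih c'
      refine ⟨c'', ?_⟩
      calc b + (ofAM r x + a') = (b + ofAM r x) + a' := by rw [add_assoc]
        _ = (ofAM r x + c') + a' := by rw [hc']
        _ = ofAM r x + (c' + a') := by rw [add_assoc]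
        _ = ofAM r x + (a' + c'') := by rw [hc'']
        _ = (ofAM r x + a') + c'' := by rw [add_assoc]
  refine ⟨part1, fun hbij => ?_⟩
  -- the shear map
  let G : X × X ≃ X × X :=
    Equiv.prodShear (Equiv.refl X) (fun x => Equiv.ofBijective _ (hLND x))
  have hgr : ∀ p : X × X, derivedR r (G p) = G (r p) := by
    rintro ⟨x, y⟩
    haveI : Nonempty X := ⟨x⟩
    have hinv : Function.invFun (ybeSigma r x) (ybeSigma r x y) = y :=
      Function.leftInverse_invFun (hLND x).1 y
    show ((ybeSigma r x y : X),
        ybeSigma r (ybeSigma r x y)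
          (ybeGamma r (Function.invFun (ybeSigma r x) (ybeSigma r x y)) x))
      = ((r (x, y)).1, ybeSigma r (r (x, y)).1 (r (x, y)).2)
    rw [hinv]
    rfl
  have hfun : derivedR r = fun p => G (r (G.symm p)) := by
    funext p
    have := hgr (G.symm p)
    rwa [G.apply_symm_apply] at this
  have hbij' : Function.Bijective (derivedR r) := by
    rw [hfun]
    exact G.bijective.comp (hbij.comp G.symm.bijective)
  have hRND : IsRightND (derivedR r) := by
    intro y
    constructor
    · intro x1 x2 hxx
      have h1 : derivedR r (x1, y) = derivedR r (x2, y) := Prod.ext rfl hxx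
      have := hbij'.1 h1
      exact congrArg Prod.fst this
    · intro z
      obtain ⟨p, hp⟩ := hbij'.2 (y, z)
      have h1 : p.2 = y := by
        have : (derivedR r p).1 = p.2 := rfl
        rw [hp] at this
        exact this.symm
      refine ⟨p.1, ?_⟩
      show (derivedR r (p.1, y)).2 = z
      rw [← h1]
      show (derivedR r p).2 = z
      rw [hp]
  refine ⟨hRND, ?_⟩
  have claimB : ∀ (x : X) (b : AM r), ∃ c : AM r, ofAM r x + b = c + ofAM r x := by
    intro x b
    induction b using am_ind with
    | h0 => exact ⟨0, by simp⟩
    | hx t b ih =>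
      obtain ⟨c', hc'⟩ := ih
      obtain ⟨w, hw⟩ := (hRND x).2 t
      refine ⟨ofAM r w + c', ?_⟩
      have hcomm : ofAM r w + ofAM r x = ofAM r x + ofAM r t := by
        rw [derived_comm]
        exact congrArg (fun z => ofAM r x + ofAM r z) hw
      calc ofAM r x + (ofAM r t + b) = (ofAM r x + ofAM r t) + b := by rw [add_assoc]
        _ = (ofAM r w + ofAM r x) + b := by rw [hcomm]
        _ = ofAM r w + (ofAM r x + b) := by rw [add_assoc]
        _ = ofAM r w + (c' + ofAM r x) := by rw [hc']
        _ = (ofAM r w + c') + ofAM r x := by rw [add_assoc]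
  intro a
  induction a using am_ind with
  | h0 => exact fun b => ⟨b, by simp⟩
  | hx x a' ih =>
    intro b
    obtain ⟨c'', hc''⟩ := ih b
    obtain ⟨c, hc⟩ := claimB x c''
    refine ⟨c, ?_⟩
    calc (ofAM r x + a') + b = ofAM r x + (a' + b) := by rw [add_assoc]
      _ = ofAM r x + (c'' + a') := by rw [hc'']
      _ = (ofAM r x + c'') + a' := by rw [add_assoc]
      _ = (c + ofAM r x) + a' := by rw [hc]
      _ = c + (ofAM r x + a') := by rw [add_assoc]
end
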